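/- If φ_n → φ in ℓ∞(ℤ₂ × ℤ) and μ_n is a maximising measure for φ_n for each n (i.e. Λ(φ_n, μ_n) = log ϱ(L₀^{φ_n}, L₁^{φ_n})), and μ_n → μ in the weak-* topology on shift-invariant measures on Σ₂, then μ is a maximising measure for φ. -/

import Mathlib

open MeasureTheory Filter

noncomputable section

/-- The full two-sided shift space on two symbols. -/
abbrev Sig := ℤ → Bool

/-- The two-sided shift map. -/
def shift : Sig → Sig := fun x i => x (i + 1)

/-- `birk φ n x = sup_{k ∈ ℤ} Σ_{i=0}^{n-1} φ(x_i, i+k)`, which equals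
`log ‖L^φ_{x_{n-1}} ⋯ L^φ_{x_0}‖` for the associated weighted shift operators. -/
def birk (φ : Bool → ℤ → ℝ) (n : ℕ) (x : Sig) : ℝ :=
  ⨆ k : ℤ, ∑ i ∈ Finset.range n, φ (x (i : ℤ)) ((i : ℤ) + k)

/-- The top Lyapunov exponent `Λ(φ,μ) = inf_{n ≥ 1} (1/n) ∫ birk φ n dμ`
(the limit exists and equals this infimum by subadditivity). -/
def Lam (φ : Bool → ℤ → ℝ) (μ : Measure Sig) : ℝ :=
  ⨅ n : ℕ, ((n : ℝ) + 1)⁻¹ * ∫ x, birk φ (n + 1) x ∂μ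

/-- `log ϱ(L₀^φ, L₁^φ) = inf_{n ≥ 1} (1/n) sup_{x} birk φ n x`. -/
def logSpr (φ : Bool → ℤ → ℝ) : ℝ :=
  ⨅ n : ℕ, ((n : ℝ) + 1)⁻¹ * ⨆ x : Sig, birk φ (n + 1) x

/-! ### Auxiliary lemmas -/

lemma birk_sum_abs_le {φ : Bool → ℤ → ℝ} {C : ℝ} (hC : ∀ a i, |φ a i| ≤ C)
    (N : ℕ) (x : Sig) (k : ℤ) :
    |∑ i ∈ Finset.range N, φ (x (i : ℤ)) ((i : ℤ) + k)| ≤ N * C := by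
  calc |∑ i ∈ Finset.range N, φ (x (i : ℤ)) ((i : ℤ) + k)|
      ≤ ∑ i ∈ Finset.range N, |φ (x (i : ℤ)) ((i : ℤ) + k)| := Finset.abs_sum_le_sum_abs _ _
    _ ≤ ∑ _i ∈ Finset.range N, C := Finset.sum_le_sum fun i _ => hC _ _
    _ = N * C := by simp [Finset.sum_const, mul_comm]

lemma birk_bddAbove {φ : Bool → ℤ → ℝ} {C : ℝ} (hC : ∀ a i, |φ a i| ≤ C)
    (N : ℕ) (x : Sig) :
    BddAbove (Set.range fun k : ℤ => ∑ i ∈ Finset.range N, φ (x (i : ℤ)) ((i : ℤ) + k)) := by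
  refine ⟨N * C, ?_⟩
  rintro _ ⟨k, rfl⟩
  exact (abs_le.1 (birk_sum_abs_le hC N x k)).2

lemma abs_birk_le {φ : Bool → ℤ → ℝ} {C : ℝ} (hC : ∀ a i, |φ a i| ≤ C) (N : ℕ) (x : Sig) :
    |birk φ N x| ≤ N * C := by
  rw [abs_le]
  constructor
  · exact le_trans (abs_le.1 (birk_sum_abs_le hC N x 0)).1 (le_ciSup (birk_bddAbove hC N x) 0)
  · exact ciSup_le fun k => (abs_le.1 (birk_sum_abs_le hC N x k)).2

lemma birk_le_birk_add {φ ψ : Bool → ℤ → ℝ} {Cψ δ : ℝ} (hψ : ∀ a i, |ψ a i| ≤ Cψ)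
    (h : ∀ a i, |φ a i - ψ a i| ≤ δ) (N : ℕ) (x : Sig) :
    birk φ N x ≤ birk ψ N x + N * δ := by
  apply ciSup_le
  intro k
  have h1 : ∑ i ∈ Finset.range N, φ (x (i : ℤ)) ((i : ℤ) + k)
      ≤ (∑ i ∈ Finset.range N, ψ (x (i : ℤ)) ((i : ℤ) + k)) + N * δ := by
    have h2 : ∀ i ∈ Finset.range N,
        φ (x (i : ℤ)) ((i : ℤ) + k) ≤ ψ (x (i : ℤ)) ((i : ℤ) + k) + δ := by
      intro i _
      have := (abs_le.1 (h (x (i : ℤ)) ((i : ℤ) + k))).2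
      linarith
    calc ∑ i ∈ Finset.range N, φ (x (i : ℤ)) ((i : ℤ) + k)
        ≤ ∑ i ∈ Finset.range N, (ψ (x (i : ℤ)) ((i : ℤ) + k) + δ) := Finset.sum_le_sum h2
      _ = (∑ i ∈ Finset.range N, ψ (x (i : ℤ)) ((i : ℤ) + k)) + N * δ := by
          rw [Finset.sum_add_distrib]; simp [mul_comm]
  exact h1.trans (add_le_add (le_ciSup (birk_bddAbove hψ N x) k) le_rfl)

lemma birk_continuous (φ : Bool → ℤ → ℝ) (N : ℕ) : Continuous (birk φ N) := by
  have h : birk φ N =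
      (fun v : Fin N → Bool => ⨆ k : ℤ, ∑ i : Fin N, φ (v i) ((i : ℤ) + k)) ∘
        (fun x (i : Fin N) => x (i : ℤ)) := by
    funext x
    simp only [Function.comp, birk, Finset.sum_range]
  rw [h]
  exact continuous_of_discreteTopology.comp (continuous_pi fun i => continuous_apply _)

lemma birk_integrable (φ : Bool → ℤ → ℝ) (N : ℕ) (ν : Measure Sig)
    [IsProbabilityMeasure ν] : Integrable (birk φ N) ν :=
  (birk_continuous φ N).integrable_of_hasCompactSupport
    (HasCompactSupport.of_compactSpace _)

lemma birk_sup_bddAbove {φ : Bool → ℤ → ℝ} {C : ℝ} (hC : ∀ a i, |φ a i| ≤ C) (N : ℕ) :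
    BddAbove (Set.range (birk φ N)) := by
  refine ⟨N * C, ?_⟩
  rintro _ ⟨x, rfl⟩
  exact (abs_le.1 (abs_birk_le hC N x)).2

lemma logSpr_term_lb {φ : Bool → ℤ → ℝ} {C : ℝ} (hC : ∀ a i, |φ a i| ≤ C) (m : ℕ) :
    -C ≤ ((m : ℝ) + 1)⁻¹ * ⨆ x : Sig, birk φ (m + 1) x := by
  have hm : (0 : ℝ) < (m : ℝ) + 1 := by positivity
  have hx : (-(((m : ℕ) + 1 : ℕ) * C) : ℝ) ≤ ⨆ x : Sig, birk φ (m + 1) x := by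
    have x0 : Sig := fun _ => false
    exact le_trans (abs_le.1 (abs_birk_le hC (m + 1) x0)).1
      (le_ciSup (birk_sup_bddAbove hC (m + 1)) x0)
  have : (-(((m : ℝ) + 1) * C) : ℝ) ≤ ⨆ x : Sig, birk φ (m + 1) x := by
    push_cast at hx; linarith
  calc -C = ((m : ℝ) + 1)⁻¹ * (-(((m : ℝ) + 1) * C)) := by field_simp
    _ ≤ ((m : ℝ) + 1)⁻¹ * ⨆ x : Sig, birk φ (m + 1) x := by
        exact mul_le_mul_of_nonneg_left this (by positivity)

lemma Lam_term_lb {φ : Bool → ℤ → ℝ} {C : ℝ} (hC : ∀ a i, |φ a i| ≤ C)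
    (ν : Measure Sig) [IsProbabilityMeasure ν] (m : ℕ) :
    -C ≤ ((m : ℝ) + 1)⁻¹ * ∫ x, birk φ (m + 1) x ∂ν := by
  have hm : (0 : ℝ) < (m : ℝ) + 1 := by positivity
  have hpt : ∀ x : Sig, (-(((m : ℝ) + 1) * C) : ℝ) ≤ birk φ (m + 1) x := by
    intro x
    have := (abs_le.1 (abs_birk_le hC (m + 1) x)).1
    push_cast at this ⊢; linarith
  have hint : (-(((m : ℝ) + 1) * C) : ℝ) ≤ ∫ x, birk φ (m + 1) x ∂ν := by
    have := integral_mono (integrable_const (-(((m : ℝ) + 1) * C)))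
      (birk_integrable φ (m + 1) ν) hpt
    simpa using this
  calc -C = ((m : ℝ) + 1)⁻¹ * (-(((m : ℝ) + 1) * C)) := by field_simp
    _ ≤ _ := mul_le_mul_of_nonneg_left hint (by positivity)

lemma logSpr_le_logSpr_add {φ ψ : Bool → ℤ → ℝ} {Cφ Cψ δ : ℝ}
    (hφ : ∀ a i, |φ a i| ≤ Cφ) (hψ : ∀ a i, |ψ a i| ≤ Cψ)
    (h : ∀ a i, |φ a i - ψ a i| ≤ δ) :
    logSpr φ ≤ logSpr ψ + δ := by
  rw [← sub_le_iff_le_add]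
  apply le_ciInf
  intro m
  rw [sub_le_iff_le_add]
  have hm : (0 : ℝ) < (m : ℝ) + 1 := by positivity
  have hbdd : BddBelow (Set.range fun m : ℕ =>
      ((m : ℝ) + 1)⁻¹ * ⨆ x : Sig, birk φ (m + 1) x) := by
    refine ⟨-Cφ, ?_⟩
    rintro _ ⟨m, rfl⟩
    exact logSpr_term_lb hφ m
  have h1 : logSpr φ ≤ ((m : ℝ) + 1)⁻¹ * ⨆ x : Sig, birk φ (m + 1) x := ciInf_le hbdd m
  have h2 : (⨆ x : Sig, birk φ (m + 1) x)
      ≤ (⨆ x : Sig, birk ψ (m + 1) x) + ((m : ℝ) + 1) * δ := by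
    apply ciSup_le
    intro x
    have := birk_le_birk_add hψ h (m + 1) x
    have h3 := le_ciSup (birk_sup_bddAbove hψ (m + 1)) x
    push_cast at this
    linarith
  refine h1.trans ?_
  have := mul_le_mul_of_nonneg_left h2 (le_of_lt (inv_pos.2 hm))
  calc ((m : ℝ) + 1)⁻¹ * ⨆ x : Sig, birk φ (m + 1) x
      ≤ ((m : ℝ) + 1)⁻¹ * ((⨆ x : Sig, birk ψ (m + 1) x) + ((m : ℝ) + 1) * δ) := this
    _ = ((m : ℝ) + 1)⁻¹ * (⨆ x : Sig, birk ψ (m + 1) x) + δ := by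
        field_simp

/-- If `φₙ → φ` in `ℓ∞({0,1} × ℤ)`, each `μₙ` is a maximising measure for `φₙ`
(i.e. `Λ(φₙ, μₙ) = log ϱ(L₀^{φₙ}, L₁^{φₙ})`), and `μₙ → μ` in the weak-* topology on
shift-invariant Borel probability measures on `Σ₂`, then `μ` is maximising for `φ`. -/
theorem maximising_of_limit
    (φn : ℕ → Bool → ℤ → ℝ) (φ : Bool → ℤ → ℝ)
    (hbn : ∀ n, ∃ C : ℝ, ∀ (a : Bool) (i : ℤ), |φn n a i| ≤ C)
    (hb : ∃ C : ℝ, ∀ (a : Bool) (i : ℤ), |φ a i| ≤ C)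
    (hconv : ∀ ε : ℝ, 0 < ε → ∃ N : ℕ, ∀ n ≥ N, ∀ (a : Bool) (i : ℤ), |φn n a i - φ a i| ≤ ε)
    (μn : ℕ → Measure Sig) (μ : Measure Sig)
    (hprobn : ∀ n, IsProbabilityMeasure (μn n)) (hinvn : ∀ n, (μn n).map shift = μn n)
    (hprob : IsProbabilityMeasure μ) (hinv : μ.map shift = μ)
    (hmax : ∀ n, Lam (φn n) (μn n) = logSpr (φn n))
    (hw : ∀ g : C(Sig, ℝ), Tendsto (fun n => ∫ x, g x ∂(μn n)) atTop (nhds (∫ x, g x ∂μ))) :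
    Lam φ μ = logSpr φ := by
  obtain ⟨C, hC⟩ := hb
  apply le_antisymm
  · -- Lam φ μ ≤ logSpr φ
    apply ciInf_mono
    · refine ⟨-C, ?_⟩
      rintro _ ⟨m, rfl⟩
      exact Lam_term_lb hC μ m
    · intro m
      have hm : (0 : ℝ) < (m : ℝ) + 1 := by positivity
      apply mul_le_mul_of_nonneg_left _ (le_of_lt (inv_pos.2 hm))
      have hpt : ∀ x : Sig, birk φ (m + 1) x ≤ ⨆ y : Sig, birk φ (m + 1) y :=
        fun x => le_ciSup (birk_sup_bddAbove hC (m + 1)) x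
      have := integral_mono (birk_integrable φ (m + 1) μ)
        (integrable_const (⨆ y : Sig, birk φ (m + 1) y)) hpt
      simpa using this
  · -- logSpr φ ≤ Lam φ μ
    apply le_ciInf
    intro m
    have hm : (0 : ℝ) < (m : ℝ) + 1 := by positivity
    have key : ∀ δ : ℝ, 0 < δ →
        logSpr φ ≤ ((m : ℝ) + 1)⁻¹ * (∫ x, birk φ (m + 1) x ∂μ) + 2 * δ := by
      intro δ hδ
      obtain ⟨N₀, hN₀⟩ := hconv δ hδ
      -- the continuous test function
      have hcont := birk_continuous φ (m + 1)
      have htend := hw ⟨birk φ (m + 1), hcont⟩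
      simp only [ContinuousMap.coe_mk] at htend
      have htend' : Tendsto
          (fun n => ((m : ℝ) + 1)⁻¹ * (∫ x, birk φ (m + 1) x ∂(μn n)) + 2 * δ) atTop
          (nhds (((m : ℝ) + 1)⁻¹ * (∫ x, birk φ (m + 1) x ∂μ) + 2 * δ)) :=
        ((htend.const_mul _).add_const _)
      refine ge_of_tendsto htend' ?_
      filter_upwards [eventually_ge_atTop N₀] with n hn
      haveI := hprobn n
      obtain ⟨Cn, hCn⟩ := hbn n
      have hdiff : ∀ (a : Bool) (i : ℤ), |φn n a i - φ a i| ≤ δ := hN₀ n hn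
      have hdiff' : ∀ (a : Bool) (i : ℤ), |φ a i - φn n a i| ≤ δ := by
        intro a i; rw [abs_sub_comm]; exact hdiff a i
      -- step 1 : logSpr φ ≤ logSpr (φn n) + δ
      have s1 : logSpr φ ≤ logSpr (φn n) + δ := logSpr_le_logSpr_add hC hCn hdiff'
      -- step 2 : logSpr (φn n) = Lam (φn n) (μn n) ≤ term m
      have hbddn : BddBelow (Set.range fun m : ℕ =>
          ((m : ℝ) + 1)⁻¹ * ∫ x, birk (φn n) (m + 1) x ∂(μn n)) := by
        refine ⟨-Cn, ?_⟩
        rintro _ ⟨m, rfl⟩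
        exact Lam_term_lb hCn (μn n) m
      have s2 : logSpr (φn n) ≤ ((m : ℝ) + 1)⁻¹ * ∫ x, birk (φn n) (m + 1) x ∂(μn n) := by
        rw [← hmax n]
        exact ciInf_le hbddn m
      -- step 3 : ∫ birk (φn n) ≤ ∫ birk φ + (m+1) δ
      have s3 : (∫ x, birk (φn n) (m + 1) x ∂(μn n))
          ≤ (∫ x, birk φ (m + 1) x ∂(μn n)) + ((m : ℝ) + 1) * δ := by
        have hpt : ∀ x : Sig, birk (φn n) (m + 1) x ≤ birk φ (m + 1) x + ((m : ℕ) + 1 : ℕ) * δ :=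
          birk_le_birk_add hC hdiff (m + 1)
        have hint2 : Integrable (fun x => birk φ (m + 1) x + (((m : ℕ) + 1 : ℕ) : ℝ) * δ)
            (μn n) := (birk_integrable φ (m + 1) (μn n)).add (integrable_const _)
        have := integral_mono (birk_integrable (φn n) (m + 1) (μn n)) hint2 hpt
        rw [integral_add (birk_integrable φ (m + 1) (μn n)) (integrable_const _)] at this
        simp only [integral_const, measure_univ, ENNReal.toReal_one, probReal_univ, smul_eq_mul, one_mul] at this
        push_cast at this
        linarith
      have s3' : ((m : ℝ) + 1)⁻¹ * (∫ x, birk (φn n) (m + 1) x ∂(μn n))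
          ≤ ((m : ℝ) + 1)⁻¹ * (∫ x, birk φ (m + 1) x ∂(μn n)) + δ := by
        have := mul_le_mul_of_nonneg_left s3 (le_of_lt (inv_pos.2 hm))
        calc ((m : ℝ) + 1)⁻¹ * (∫ x, birk (φn n) (m + 1) x ∂(μn n))
            ≤ ((m : ℝ) + 1)⁻¹ * ((∫ x, birk φ (m + 1) x ∂(μn n)) + ((m : ℝ) + 1) * δ) := this
          _ = ((m : ℝ) + 1)⁻¹ * (∫ x, birk φ (m + 1) x ∂(μn n)) + δ := by field_simp
      linarith
    -- conclude from key
    by_contra hlt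
    push_neg at hlt
    set T := ((m : ℝ) + 1)⁻¹ * ∫ x, birk φ (m + 1) x ∂μ
    have hδ : 0 < (logSpr φ - T) / 4 := by simp only [T] at hlt ⊢; linarith
    have := key _ hδ
    simp only [T] at this hlt
    linarith
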